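/- Let k ∈ {−1,0,1}, ε, n ∈ {0,1} with εn = εk = 0, and let a, b : ℝ → (0,∞) be differentiable. Let (t,r) be a point with Σ(r,k) > 0 and Σ_{,r}(r,k) ≠ 0, and suppose the three exterior conditions hold at (t,r): (I) D̂_t Ĉ_r − D̂_r Ĉ_t = 0, (II) Ê_t D̂_r − Ê_r D̂_t = 0, (III) Ê_t Ĉ_r − Ê_r Ĉ_t = 0. Then a'(t) = 0, and moreover either n = 0 or b'(t) = 0. (In particular, if n = 1 then both a'(t) = 0 and b'(t) = 0, so the LRS metric is static at t.) -/

import Mathlib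

/-- `Σ(y,k)`: `sin y` for `k = 1`, `y` for `k = 0`, `sinh y` for `k = −1`. -/
noncomputable def Sig (k y : ℝ) : ℝ :=
  if k = 1 then Real.sin y else if k = 0 then y else Real.sinh y

/-- `Σ_{,y}(y,k)`: `cos y` for `k = 1`, `1` for `k = 0`, `cosh y` for `k = −1`. -/
noncomputable def Sigr (k y : ℝ) : ℝ :=
  if k = 1 then Real.cos y else if k = 0 then 1 else Real.cosh y

/-- `F(y,k)`: `−cos y` for `k = 1`, `y²/2` for `k = 0`, `cosh y` for `k = −1`. -/
noncomputable def Ffun (k y : ℝ) : ℝ :=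
  if k = 1 then -Real.cos y else if k = 0 then y ^ 2 / 2 else Real.cosh y

/-- LRS metric coefficient `Ĉ(t,r) = (b(t)²Σ(r,k)² + n a(t)²(F(r,k)+k)²)^{1/2}`. -/
noncomputable def Chat (k n : ℝ) (a b : ℝ → ℝ) (t r : ℝ) : ℝ :=
  Real.sqrt ((b t) ^ 2 * (Sig k r) ^ 2 + n * (a t) ^ 2 * (Ffun k r + k) ^ 2)

/-- LRS metric coefficient `D̂(t,r) = (a(t)² + ε r² b(t)²)^{1/2}`. -/
noncomputable def Dhat (ε : ℝ) (a b : ℝ → ℝ) (t r : ℝ) : ℝ :=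
  Real.sqrt ((a t) ^ 2 + ε * r ^ 2 * (b t) ^ 2)

/-- LRS metric coefficient `Ê(t,r) = n a(t)²(F(r,k)+k)`. -/
noncomputable def Ehat (k n : ℝ) (a : ℝ → ℝ) (t r : ℝ) : ℝ :=
  n * (a t) ^ 2 * (Ffun k r + k)

/-!
Once the derivatives of the coefficients are written out, each exterior condition becomes a
polynomial identity after clearing the positive square roots `Ĉ`, `D̂`. For `n = 0` only (I) is
non-trivial, and it reduces to `a a' b² Σ Σ_{,r} = 0`. For `n = 1` we have `ε = 0`, so `D̂ = a`
does not depend on `r`: (II) reduces to `a³ a' Σ = 0`, and then (III) to `a² b b' Σ³ = 0`.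
-/

section
variable {k ε n : ℝ} {a b : ℝ → ℝ} {t r a' b' : ℝ}

lemma hasDerivAt_Sig (hk : k = -1 ∨ k = 0 ∨ k = 1) (y : ℝ) :
    HasDerivAt (fun s => Sig k s) (Sigr k y) y := by
  rcases hk with rfl | rfl | rfl <;> simp only [Sig, Sigr] <;> norm_num
  · exact Real.hasDerivAt_sinh y
  · exact hasDerivAt_id y
  · exact Real.hasDerivAt_sin y

lemma hasDerivAt_Ffun (hk : k = -1 ∨ k = 0 ∨ k = 1) (y : ℝ) :
    HasDerivAt (fun s => Ffun k s) (Sig k y) y := by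
  rcases hk with rfl | rfl | rfl <;> simp only [Ffun, Sig] <;> norm_num
  · exact Real.hasDerivAt_cosh y
  · simpa using (hasDerivAt_pow 2 y).div_const 2
  · exact (Real.hasDerivAt_cos y).neg.congr_deriv (neg_neg _)

lemma eps_mul_Sig_eq (hε : ε = 0 ∨ ε = 1) (hεk : ε * k = 0) (r : ℝ) :
    ε * Sig k r = ε * (r * Sigr k r) := by
  rcases hε with rfl | rfl
  · simp
  · obtain rfl : k = 0 := by simpa using hεk
    simp [Sig, Sigr]

lemma Dhat_pos (hε : 0 ≤ ε) (hat : 0 < a t) : 0 < Dhat ε a b t r :=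
  Real.sqrt_pos.mpr (by positivity)

lemma Chat_pos (hn : 0 ≤ n) (hbt : 0 < b t) (hSig : Sig k r ≠ 0) : 0 < Chat k n a b t r :=
  Real.sqrt_pos.mpr (by positivity)

lemma hasDerivAt_Dhat_time (hε : 0 ≤ ε) (ha : HasDerivAt a a' t) (hb : HasDerivAt b b' t)
    (hat : 0 < a t) :
    HasDerivAt (fun s => Dhat ε a b s r)
      ((a t * a' + ε * r ^ 2 * b t * b') / Dhat ε a b t r) t := by
  have hD := Dhat_pos (b := b) (r := r) hε hat
  refine (((ha.pow 2).add ((hb.pow 2).const_mul (ε * r ^ 2))).sqrt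
    (Real.sqrt_pos.mp hD).ne').congr_deriv ?_
  unfold Dhat at hD ⊢
  simp only [Pi.add_apply, Pi.pow_apply]
  field_simp
  ring

lemma hasDerivAt_Dhat_radial (hε : 0 ≤ ε) (hat : 0 < a t) :
    HasDerivAt (fun s => Dhat ε a b t s) (ε * r * b t ^ 2 / Dhat ε a b t r) r := by
  have hD := Dhat_pos (b := b) (r := r) hε hat
  refine (((((hasDerivAt_pow 2 r).const_mul ε).mul_const (b t ^ 2)).const_add (a t ^ 2)).sqrt
    (Real.sqrt_pos.mp hD).ne').congr_deriv ?_
  unfold Dhat at hD ⊢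
  field_simp
  ring

lemma hasDerivAt_Chat_time (hn : 0 ≤ n) (ha : HasDerivAt a a' t) (hb : HasDerivAt b b' t)
    (hbt : 0 < b t) (hSig : Sig k r ≠ 0) :
    HasDerivAt (fun s => Chat k n a b s r)
      ((b t * b' * Sig k r ^ 2 + n * a t * a' * (Ffun k r + k) ^ 2) / Chat k n a b t r) t := by
  have hC := Chat_pos (a := a) hn hbt hSig
  refine ((((hb.pow 2).mul_const _).add (((ha.pow 2).const_mul n).mul_const _)).sqrt
    (Real.sqrt_pos.mp hC).ne').congr_deriv ?_
  unfold Chat at hC ⊢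
  simp only [Pi.add_apply, Pi.pow_apply]
  field_simp
  ring

lemma hasDerivAt_Chat_radial (hk : k = -1 ∨ k = 0 ∨ k = 1) (hn : 0 ≤ n) (hbt : 0 < b t)
    (hSig : Sig k r ≠ 0) :
    HasDerivAt (fun s => Chat k n a b t s)
      ((b t ^ 2 * Sig k r * Sigr k r + n * a t ^ 2 * (Ffun k r + k) * Sig k r) /
        Chat k n a b t r) r := by
  have hC := Chat_pos (a := a) hn hbt hSig
  refine (((((hasDerivAt_Sig hk r).pow 2).const_mul _).add
    ((((hasDerivAt_Ffun hk r).add_const k).pow 2).const_mul _)).sqrt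
    (Real.sqrt_pos.mp hC).ne').congr_deriv ?_
  unfold Chat at hC ⊢
  simp only [Pi.add_apply, Pi.pow_apply]
  field_simp
  ring

lemma hasDerivAt_Ehat_time (ha : HasDerivAt a a' t) :
    HasDerivAt (fun s => Ehat k n a s r) (2 * n * a t * a' * (Ffun k r + k)) t :=
  (((ha.pow 2).const_mul n).mul_const (Ffun k r + k)).congr_deriv (by ring)

lemma hasDerivAt_Ehat_radial (hk : k = -1 ∨ k = 0 ∨ k = 1) :
    HasDerivAt (fun s => Ehat k n a t s) (n * a t ^ 2 * Sig k r) r :=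
  ((hasDerivAt_Ffun hk r).add_const k).const_mul _

lemma deriv_eq_zero_of_exterior_I (hk : k = -1 ∨ k = 0 ∨ k = 1) (hε : ε = 0 ∨ ε = 1)
    (hεk : ε * k = 0) (ha : DifferentiableAt ℝ a t) (hb : DifferentiableAt ℝ b t)
    (hat : 0 < a t) (hbt : 0 < b t) (hSig : 0 < Sig k r) (hSigr : Sigr k r ≠ 0)
    (hI : deriv (fun s => Dhat ε a b s r) t * deriv (fun s => Chat k 0 a b t s) r -
        deriv (fun s => Dhat ε a b t s) r * deriv (fun s => Chat k 0 a b s r) t = 0) :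
    deriv a t = 0 := by
  have hε0 : 0 ≤ ε := by rcases hε with rfl | rfl <;> norm_num
  have hD := Dhat_pos (b := b) (r := r) hε0 hat
  have hC := Chat_pos (a := a) le_rfl hbt hSig.ne'
  rw [(hasDerivAt_Dhat_time hε0 ha.hasDerivAt hb.hasDerivAt hat).deriv,
    (hasDerivAt_Dhat_radial hε0 hat).deriv,
    (hasDerivAt_Chat_time le_rfl ha.hasDerivAt hb.hasDerivAt hbt hSig.ne').deriv,
    (hasDerivAt_Chat_radial hk le_rfl hbt hSig.ne').deriv] at hI
  field_simp at hI
  -- the `ε`-terms cancel: `ε ≠ 0` forces `k = 0`, where `Σ(r) = r · Σ_{,r}(r)`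
  have key : deriv a t * (a t * b t ^ 2 * Sig k r * Sigr k r) = 0 := by
    linear_combination hI + r * b t ^ 3 * deriv b t * Sig k r * eps_mul_Sig_eq hε hεk r
  exact (mul_eq_zero.mp key).resolve_right (mul_ne_zero (by positivity) hSigr)

lemma deriv_eq_zero_of_exterior_II (hk : k = -1 ∨ k = 0 ∨ k = 1)
    (ha : DifferentiableAt ℝ a t) (hb : DifferentiableAt ℝ b t) (hat : 0 < a t)
    (hSig : 0 < Sig k r)
    (hII : deriv (fun s => Ehat k 1 a s r) t * deriv (fun s => Dhat 0 a b t s) r -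
        deriv (fun s => Ehat k 1 a t s) r * deriv (fun s => Dhat 0 a b s r) t = 0) :
    deriv a t = 0 := by
  have hD := Dhat_pos (b := b) (r := r) le_rfl hat
  rw [(hasDerivAt_Ehat_time ha.hasDerivAt).deriv, (hasDerivAt_Ehat_radial hk).deriv,
    (hasDerivAt_Dhat_time le_rfl ha.hasDerivAt hb.hasDerivAt hat).deriv,
    (hasDerivAt_Dhat_radial le_rfl hat).deriv] at hII
  field_simp at hII
  have key : deriv a t * (a t ^ 3 * Sig k r) = 0 := by linear_combination -hII
  exact (mul_eq_zero.mp key).resolve_right (by positivity)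

lemma deriv_eq_zero_of_exterior_III (hk : k = -1 ∨ k = 0 ∨ k = 1)
    (ha : DifferentiableAt ℝ a t) (hb : DifferentiableAt ℝ b t) (hat : 0 < a t)
    (hbt : 0 < b t) (hSig : 0 < Sig k r) (ha' : deriv a t = 0)
    (hIII : deriv (fun s => Ehat k 1 a s r) t * deriv (fun s => Chat k 1 a b t s) r -
        deriv (fun s => Ehat k 1 a t s) r * deriv (fun s => Chat k 1 a b s r) t = 0) :
    deriv b t = 0 := by
  have hC := Chat_pos (a := a) zero_le_one hbt hSig.ne'
  rw [(hasDerivAt_Ehat_time ha.hasDerivAt).deriv, (hasDerivAt_Ehat_radial hk).deriv,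
    (hasDerivAt_Chat_time zero_le_one ha.hasDerivAt hb.hasDerivAt hbt hSig.ne').deriv,
    (hasDerivAt_Chat_radial hk zero_le_one hbt hSig.ne').deriv, ha'] at hIII
  field_simp at hIII
  have key : deriv b t * (a t ^ 2 * b t * Sig k r ^ 3) = 0 := by linear_combination -hIII
  exact (mul_eq_zero.mp key).resolve_right (by positivity)

end

/-- if at a point `(t,r)` with `Σ(r,k) > 0` and `Σ_{,r}(r,k) ≠ 0` the three
exterior conditions (I) `D̂_t Ĉ_r − D̂_r Ĉ_t = 0`, (II) `Ê_t D̂_r − Ê_r D̂_t = 0`,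
(III) `Ê_t Ĉ_r − Ê_r Ĉ_t = 0` hold, then `a'(t) = 0` and moreover `n = 0` or `b'(t) = 0`
(so for `n = 1` the LRS metric is static at `t`). -/
theorem exterior_conditions_force_staticity (k ε n : ℝ)
    (hk : k = -1 ∨ k = 0 ∨ k = 1) (hε : ε = 0 ∨ ε = 1) (hn : n = 0 ∨ n = 1)
    (hεn : ε * n = 0) (hεk : ε * k = 0)
    (a b : ℝ → ℝ) (ha : Differentiable ℝ a) (hb : Differentiable ℝ b)
    (hapos : ∀ s, 0 < a s) (hbpos : ∀ s, 0 < b s)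
    (t r : ℝ) (hSig : 0 < Sig k r) (hSigr : Sigr k r ≠ 0)
    (hI : deriv (fun s => Dhat ε a b s r) t * deriv (fun s => Chat k n a b t s) r -
        deriv (fun s => Dhat ε a b t s) r * deriv (fun s => Chat k n a b s r) t = 0)
    (hII : deriv (fun s => Ehat k n a s r) t * deriv (fun s => Dhat ε a b t s) r -
        deriv (fun s => Ehat k n a t s) r * deriv (fun s => Dhat ε a b s r) t = 0)
    (hIII : deriv (fun s => Ehat k n a s r) t * deriv (fun s => Chat k n a b t s) r -
        deriv (fun s => Ehat k n a t s) r * deriv (fun s => Chat k n a b s r) t = 0) :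
    deriv a t = 0 ∧ (n = 0 ∨ deriv b t = 0) := by
  rcases hn with rfl | rfl
  · exact ⟨deriv_eq_zero_of_exterior_I hk hε hεk (ha t) (hb t) (hapos t) (hbpos t) hSig hSigr hI,
      Or.inl rfl⟩
  · obtain rfl : ε = 0 := by simpa using hεn
    have ha' := deriv_eq_zero_of_exterior_II hk (ha t) (hb t) (hapos t) hSig hII
    exact ⟨ha', Or.inr <|
      deriv_eq_zero_of_exterior_III hk (ha t) (hb t) (hapos t) (hbpos t) hSig ha' hIII⟩
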